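/- arXiv:2003.03659 — 7 statements merged into one kernel-verified Lean document; each statement's English description precedes it below -/
import Mathlib

section
/- Let R be a commutative ring containing ℚ and let J be an ideal of the polynomial ring R[X] that is stable under the R-linear Euler operator X·d/dX (i.e. X·f' ∈ J for all f ∈ J). Then for every f = Σₙ aₙ Xⁿ in J, each monomial component aₙ Xⁿ belongs to J. -/
/-- If an ideal `J` of `R[X]` (with `R` a `ℚ`-algebra) is stable under the Euler
operator `f ↦ X * f'`, then `J` contains each monomial component of each of its members. -/
theorem stmt0 (R : Type*) [CommRing R] [Algebra ℚ R]
    (J : Ideal (Polynomial R))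
    (hJ : ∀ f ∈ J, Polynomial.X * Polynomial.derivative f ∈ J) :
    ∀ f ∈ J, ∀ n : ℕ, Polynomial.C (f.coeff n) * Polynomial.X ^ n ∈ J := by
  open Polynomial in
  suffices H : ∀ d : ℕ, ∀ f ∈ J, f.natDegree ≤ d →
      ∀ n, Polynomial.C (f.coeff n) * Polynomial.X ^ n ∈ J by
    intro f hf n; exact H f.natDegree f hf le_rfl n
  intro d
  induction d with
  | zero =>
    intro f hf hd n
    rcases n with _ | n
    · rw [Polynomial.eq_C_of_natDegree_le_zero hd] at hf ⊢
      simpa using hf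
    · rw [Polynomial.coeff_eq_zero_of_natDegree_lt (lt_of_le_of_lt hd (Nat.succ_pos n))]
      simp
  | succ d ih =>
    intro f hf hd
    rcases Nat.lt_or_ge f.natDegree (d + 1) with h | h
    · exact ih f hf (Nat.lt_succ_iff.mp h)
    have hD : f.natDegree = d + 1 := le_antisymm hd h
    set D := d + 1 with hDdef
    set g := Polynomial.X * Polynomial.derivative f - (D : Polynomial R) * f with hgdef
    have hgJ : g ∈ J := J.sub_mem (hJ f hf) (J.mul_mem_left _ hf)
    have hcoe : ∀ k, g.coeff k = ((k : R) - D) * f.coeff k := by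
      intro k
      rcases k with _ | k
      · simp [hgdef]
      · simp [hgdef, Polynomial.coeff_X_mul, Polynomial.coeff_derivative]
        ring
    have hgdeg : g.natDegree ≤ d := by
      rw [Polynomial.natDegree_le_iff_coeff_eq_zero]
      intro m hm
      rw [hcoe]
      rcases Nat.lt_or_ge D m with h2 | h2
      · rw [Polynomial.coeff_eq_zero_of_natDegree_lt (by omega), mul_zero]
      · have : m = D := by omega
        rw [this]; ring
    have hne : ∀ k, k ≠ D → Polynomial.C (f.coeff k) * Polynomial.X ^ k ∈ J := by
      intro k hk
      have hinv : algebraMap ℚ R (((k : ℚ) - D)⁻¹) * ((k : R) - D) = 1 := by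
        have h1 : ((k : ℚ) - D) ≠ 0 := by
          intro h
          apply hk
          exact_mod_cast sub_eq_zero.mp h
        have h2 : algebraMap ℚ R ((k : ℚ) - D) = (k : R) - D := by
          push_cast [map_sub]
          simp
        rw [← h2, ← map_mul, inv_mul_cancel₀ h1, map_one]
      have hkey : Polynomial.C (f.coeff k) * Polynomial.X ^ k =
          Polynomial.C (algebraMap ℚ R (((k : ℚ) - D)⁻¹)) *
            (Polynomial.C (g.coeff k) * Polynomial.X ^ k) := by
        rw [hcoe, ← mul_assoc, ← Polynomial.C_mul, ← mul_assoc, hinv, one_mul]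
      rw [hkey]
      exact J.mul_mem_left _ (ih g hgJ hgdeg k)
    intro n
    rcases eq_or_ne n D with hnD | hn
    · rw [hnD]
      have hsum : f = ∑ i ∈ Finset.range (D + 1), Polynomial.C (f.coeff i) * Polynomial.X ^ i := by
        conv_lhs => rw [Polynomial.as_sum_range' f (D + 1) (by omega)]
        simp [Polynomial.C_mul_X_pow_eq_monomial]
      have heq : Polynomial.C (f.coeff D) * Polynomial.X ^ D =
          f - ∑ i ∈ Finset.range D, Polynomial.C (f.coeff i) * Polynomial.X ^ i := by
        rw [eq_sub_iff_add_eq, add_comm, ← Finset.sum_range_succ, ← hsum]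
      rw [heq]
      exact J.sub_mem hf (Ideal.sum_mem J fun i hi =>
        hne i (by have := Finset.mem_range.mp hi; omega))
    · exact hne n hn
end

section
/- Let R be a Noetherian commutative ring containing ℚ and let J be an ideal of the formal power series ring R⟦X⟧ that is stable under the formal derivative d/dX. Then J is generated by its constant coefficients: J = (J ∩ R)·R⟦X⟧, where J ∩ R is viewed via the inclusion of R as constant series. -/
/-!
The operator `g ↦ g - (1/n) X g'` lies in `J` whenever `g` does, kills the `Xⁿ`-coefficient
of `g` and does not touch the lower ones (it multiplies the `Xᵏ`-coefficient by `1 - k/n`).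
Applying it for `n = 1, 2, …` to `f ∈ J` gives elements of `J` converging `X`-adically to
the constant `f(0)`; since `X` lies in the Jacobson radical of the Noetherian ring `R⟦X⟧`,
Krull's intersection theorem makes `J` closed, so `f(0) ∈ J`. Applied to `f⁽ⁿ⁾`, whose constant
term is `n! aₙ`, this puts every coefficient of `f` in `J ∩ R`, a finitely generated ideal.
-/

open scoped Nat

namespace PowerSeries

variable {R : Type*} [CommRing R]

theorem X_mem_jacobson_bot : (X : R⟦X⟧) ∈ Ideal.jacobson ⊥ :=
  Ideal.mem_jacobson_bot.mpr fun f ↦ isUnit_iff_constantCoeff.mpr (by simp)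

theorem mem_of_forall_exists_X_pow_dvd_sub [IsNoetherianRing R] {J : Ideal R⟦X⟧} {f : R⟦X⟧}
    (hf : ∀ n, ∃ g ∈ J, X ^ n ∣ f - g) : f ∈ J := by
  have hJ : IsHausdorff (Ideal.span {(X : R⟦X⟧)}) (R⟦X⟧ ⧸ J) :=
    .of_le_jacobson _ _ (Ideal.span_le.mpr (Set.singleton_subset_iff.mpr X_mem_jacobson_bot))
  rw [← Ideal.Quotient.eq_zero_iff_mem]
  refine hJ.haus _ fun n ↦ SModEq.zero.mpr ?_
  obtain ⟨g, hg, h, hh⟩ := hf n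
  have : Ideal.Quotient.mk J f = (X : R⟦X⟧) ^ n • Submodule.Quotient.mk h := by
    rw [← Submodule.Quotient.mk_smul, smul_eq_mul, ← hh]
    exact (Submodule.Quotient.eq J).mpr (by simpa using hg)
  rw [this, Ideal.span_singleton_pow]
  exact Submodule.smul_mem_smul (Ideal.mem_span_singleton_self _) trivial

theorem coeff_X_mul_derivative (g : R⟦X⟧) (k : ℕ) : coeff k (X * d⁄dX R g) = k * coeff k g := by
  cases k with
  | zero => simp
  | succ k => rw [coeff_succ_X_mul, coeff_derivative, mul_comm]; push_cast; rfl

theorem mem_map_C_of_forall_coeff_mem {I : Ideal R} (hI : I.FG) {f : R⟦X⟧}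
    (hf : ∀ n, coeff n f ∈ I) : f ∈ I.map C := by
  obtain ⟨k, v, rfl⟩ := Submodule.fg_iff_exists_fin_generating_family.mp hI
  choose c hc using fun n ↦ (Submodule.mem_span_range_iff_exists_fun R).mp (hf n)
  have hsum : f = ∑ i, C (v i) * mk fun n ↦ c n i := by
    ext n
    simp [← hc n, mul_comm]
  rw [hsum]
  exact Ideal.sum_mem _ fun i _ ↦
    Ideal.mul_mem_right _ _ (Ideal.mem_map_of_mem _ (Submodule.subset_span ⟨i, rfl⟩))

variable [Algebra ℚ R]

theorem X_pow_succ_dvd_sub_smul_X_mul_derivative {g : R⟦X⟧} {n : ℕ} (hn : n ≠ 0)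
    (h : X ^ n ∣ g) : X ^ (n + 1) ∣ g - (n : ℚ)⁻¹ • (X * d⁄dX R g) := by
  rw [X_pow_dvd_iff] at h ⊢
  intro k hk
  rw [map_sub, LinearMap.map_smul_of_tower, coeff_X_mul_derivative]
  rcases (Nat.lt_succ_iff.mp hk).lt_or_eq with hlt | rfl
  · simp [h k hlt]
  · rw [Algebra.smul_def, ← map_natCast (algebraMap ℚ R), ← mul_assoc, ← map_mul,
      inv_mul_cancel₀ (Nat.cast_ne_zero.mpr hn), map_one, one_mul, sub_self]

theorem exists_mem_X_pow_succ_dvd_sub_C_constantCoeff {J : Ideal R⟦X⟧}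
    (hJ : Set.MapsTo (d⁄dX R) J J) {f : R⟦X⟧} (hf : f ∈ J) (n : ℕ) :
    ∃ g ∈ J, X ^ (n + 1) ∣ g - C (constantCoeff f) := by
  induction n with
  | zero => exact ⟨f, hf, by simp [X_dvd_iff]⟩
  | succ n ih =>
    obtain ⟨g, hg, hdvd⟩ := ih
    refine ⟨g - ((n + 1 : ℕ) : ℚ)⁻¹ • (X * d⁄dX R g),
      J.sub_mem hg (J.smul_of_tower_mem _ (J.mul_mem_left X (hJ hg))), ?_⟩
    simpa [sub_right_comm] using X_pow_succ_dvd_sub_smul_X_mul_derivative n.succ_ne_zero hdvd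

theorem C_constantCoeff_mem [IsNoetherianRing R] {J : Ideal R⟦X⟧}
    (hJ : Set.MapsTo (d⁄dX R) J J) {f : R⟦X⟧} (hf : f ∈ J) : C (constantCoeff f) ∈ J :=
  mem_of_forall_exists_X_pow_dvd_sub fun n ↦
    let ⟨g, hg, hdvd⟩ := exists_mem_X_pow_succ_dvd_sub_C_constantCoeff hJ hf n
    ⟨g, hg, dvd_sub_comm.mp ((pow_dvd_pow X n.le_succ).trans hdvd)⟩

theorem coeff_mem_comap_C [IsNoetherianRing R] {J : Ideal R⟦X⟧}
    (hJ : Set.MapsTo (d⁄dX R) J J) {f : R⟦X⟧} (hf : f ∈ J) (n : ℕ) : coeff n f ∈ J.comap C := by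
  have hmem := C_constantCoeff_mem hJ (hJ.iterate n hf)
  rw [constantCoeff_iterate_derivative] at hmem
  have hunit : IsUnit (n ! : R) := by
    have : (n ! : ℚ) ≠ 0 := mod_cast n.factorial_ne_zero
    simpa using (isUnit_iff_ne_zero.mpr this).map (algebraMap ℚ R)
  exact ((J.comap C).unit_mul_mem_iff_mem hunit).mp hmem

end PowerSeries

/-- If an ideal `J` of `R⟦X⟧` (with `R` a Noetherian `ℚ`-algebra) is stable under the
formal derivative, then `J` is generated by its "constants": `J = (J ∩ R)·R⟦X⟧`. -/
theorem stmt1 (R : Type*) [CommRing R] [IsNoetherianRing R] [Algebra ℚ R]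
    (J : Ideal (PowerSeries R))
    (hJ : ∀ f ∈ J, PowerSeries.derivativeFun f ∈ J) :
    J = Ideal.map (PowerSeries.C : R →+* PowerSeries R) (Ideal.comap (PowerSeries.C : R →+* PowerSeries R) J) :=
  le_antisymm (fun _ hf ↦ PowerSeries.mem_map_C_of_forall_coeff_mem (IsNoetherian.noetherian _)
    (PowerSeries.coeff_mem_comap_C hJ hf)) Ideal.map_comap_le
end

section
/- Let k ⊆ l be fields of characteristic zero and suppose there exists a k-derivation ∂ : l → l whose kernel is exactly k. Let e₁, …, eₙ ∈ l be linearly independent over k. Then there exists an operator δ : l → l lying in the (non-commutative) subring of k-linear endomorphisms of l generated by ∂ together with multiplications by elements of l, such that δ(e₁) = 1 and δ(eⱼ) = 0 for all 2 ≤ j ≤ n. -/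
/-- If `∂` is a `k`-derivation of `l` with kernel exactly `k`, and `e 0, …, e n` are
`k`-linearly independent, then some differential operator (an element of the subring of
`End_k(l)` generated by `∂` and multiplications) sends `e 0` to `1` and kills the other `e j`. -/
theorem stmt4 (k l : Type*) [Field k] [Field l] [CharZero k] [CharZero l] [Algebra k l]
    (D : Derivation k l l) (hker : ∀ x : l, D x = 0 ↔ x ∈ (algebraMap k l).range)
    (n : ℕ) (e : Fin (n + 1) → l) (he : LinearIndependent k e) :
    ∃ δ ∈ Subring.closure
        ({D.toLinearMap} ∪ Set.range fun a : l => LinearMap.mulLeft k a :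
          Set (Module.End k l)),
      δ (e 0) = 1 ∧ ∀ j : Fin (n + 1), j ≠ 0 → δ (e j) = 0 := by
  induction n with
  | zero =>
    have h0 : e 0 ≠ 0 := he.ne_zero 0
    refine ⟨LinearMap.mulLeft k (e 0)⁻¹, ?_, ?_, ?_⟩
    · exact Subring.subset_closure (Or.inr ⟨(e 0)⁻¹, rfl⟩)
    · simp [LinearMap.mulLeft_apply, inv_mul_cancel₀ h0]
    · intro j hj
      exact absurd (Fin.eq_zero j) hj
  | succ n ih =>
    set L : l := e (Fin.last (n + 1)) with hLdef
    have hL : L ≠ 0 := he.ne_zero _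
    set g : Fin (n + 1) → l := fun j => D (L⁻¹ * e j.castSucc) with hgdef
    have hg : LinearIndependent k g := by
      rw [Fintype.linearIndependent_iff]
      intro c hc i
      have h1 : D (∑ j, c j • (L⁻¹ * e j.castSucc)) = 0 := by
        rw [map_sum]
        simpa [hgdef] using hc
      rw [hker] at h1
      obtain ⟨a, ha⟩ := h1
      have h2 : ∑ j, c j • e j.castSucc = a • L := by
        have := congrArg (· * L) ha
        simp only [Finset.sum_mul, smul_mul_assoc] at this
        rw [Algebra.smul_def]
        rw [this]
        refine Finset.sum_congr rfl fun j _ => ?_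
        rw [mul_comm L⁻¹, mul_assoc, inv_mul_cancel₀ hL, mul_one]
      have h3 : ∑ i : Fin (n + 2), (Fin.snoc c (-a) : Fin (n + 2) → k) i • e i = 0 := by
        rw [Fin.sum_univ_castSucc]
        simp only [Fin.snoc_castSucc, Fin.snoc_last]
        rw [h2, ← hLdef, neg_smul]
        exact add_neg_cancel _
      have h4 := (Fintype.linearIndependent_iff.mp he) _ h3 i.castSucc
      simpa using h4
    obtain ⟨δ', hmem, hδ0, hδj⟩ := ih g hg
    refine ⟨δ' * D.toLinearMap * LinearMap.mulLeft k L⁻¹, ?_, ?_, ?_⟩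
    · refine Subring.mul_mem _ (Subring.mul_mem _ hmem ?_) ?_
      · exact Subring.subset_closure (Or.inl rfl)
      · exact Subring.subset_closure (Or.inr ⟨L⁻¹, rfl⟩)
    · have : (0 : Fin (n + 2)) = (0 : Fin (n + 1)).castSucc := by simp
      rw [Module.End.mul_apply, Module.End.mul_apply, LinearMap.mulLeft_apply, this]
      exact hδ0
    · intro j hj
      rw [Module.End.mul_apply, Module.End.mul_apply, LinearMap.mulLeft_apply]
      refine Fin.lastCases ?_ ?_ j hj
      · intro _
        have : D ((L : l)⁻¹ * L) = 0 := by
          rw [inv_mul_cancel₀ hL]; exact Derivation.map_one_eq_zero D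
        change δ' (D (L⁻¹ * L)) = 0
        rw [this]; exact map_zero δ'
      · intro i hi
        have hi0 : i ≠ 0 := by
          intro h; apply hi; rw [h]; simp
        exact hδj i hi0
end

section
/- Let P ⊆ Q be finitely generated, cancellative, torsion-free, saturated commutative monoids (fs monoids) such that the inclusion is exact, i.e. P = Q ∩ P^gp inside the Grothendieck group Q^gp. For an element q̃ of the quotient group Q^gp/P^gp, let Q_{q̃} be the set of elements of Q mapping to q̃. Then Q_{q̃} is a finitely generated P-set: there exist q₁, …, qₙ ∈ Q_{q̃} with Q_{q̃} = ⋃ᵢ (qᵢ + P). -/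
/-!
Since `Q` is finitely generated, `ℤ[Q]` is Noetherian, so the monomial ideal spanned by any subset
`F ⊆ Q` is generated by finitely many of its monomials: `F` is contained in finitely many
translates `m + Q` with `m ∈ F`. Applied to the fiber over `q̃`, the translating element is
a difference of two elements of the fiber, hence lies in `Q ∩ P^gp = P` by exactness.
-/

theorem AddMonoid.FG.exists_finset_subset_forall_eq_add {M : Type*} [AddCommMonoid M]
    [AddMonoid.FG M] (F : Set M) :
    ∃ F₀ : Finset M, ↑F₀ ⊆ F ∧ ∀ x ∈ F, ∃ m ∈ F₀, ∃ d : M, x = m + d := by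
  classical
  have : IsNoetherianRing (AddMonoidAlgebra ℤ M) := Algebra.FiniteType.isNoetherianRing ℤ _
  obtain ⟨T, hTF, hspan⟩ := (Submodule.fg_span_iff_fg_span_finset_subset _).mp
    (IsNoetherian.noetherian (Ideal.span (AddMonoidAlgebra.of' ℤ M '' F)))
  obtain ⟨F₀, hF₀F, rfl⟩ := Finset.subset_set_image_iff.mp hTF
  refine ⟨F₀, hF₀F, fun x hx => ?_⟩
  have hxI : AddMonoidAlgebra.of' ℤ M x ∈ Ideal.span (AddMonoidAlgebra.of' ℤ M '' F₀) := by
    rw [← Finset.coe_image, Ideal.span, ← hspan]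
    exact Ideal.subset_span ⟨x, hx, rfl⟩
  obtain ⟨m, hm, d, hxd⟩ := AddMonoidAlgebra.mem_ideal_span_of'_image.mp hxI x (by simp)
  exact ⟨m, hm, d, hxd.trans (add_comm d m)⟩

theorem AddSubmonoid.FG.exists_finset_subset_forall_eq_add {G : Type*} [AddCommMonoid G]
    {Q : AddSubmonoid G} (hQ : Q.FG) {F : Set G} (hFQ : F ⊆ Q) :
    ∃ F₀ : Finset G, ↑F₀ ⊆ F ∧ ∀ x ∈ F, ∃ m ∈ F₀, ∃ d ∈ Q, x = m + d := by
  classical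
  have : AddMonoid.FG Q := (AddMonoid.fg_iff_addSubmonoid_fg Q).mpr hQ
  obtain ⟨F₀, hF₀F, hcover⟩ :=
    AddMonoid.FG.exists_finset_subset_forall_eq_add {x : Q | (x : G) ∈ F}
  refine ⟨F₀.image (↑), by simpa [Set.subset_def] using hF₀F, fun x hx => ?_⟩
  obtain ⟨m, hm, d, hxd⟩ := hcover ⟨x, hFQ hx⟩ hx
  exact ⟨m, Finset.mem_image_of_mem _ hm, d, d.2, congrArg Subtype.val hxd⟩

theorem stmt8_general (G : Type*) [AddCommGroup G]
    (P Q : AddSubmonoid G) (hPQ : P ≤ Q)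
    (hQfg : Q.FG)
    (hexact : ∀ x ∈ Q, x ∈ AddSubgroup.closure (P : Set G) → x ∈ P)
    (q₀ : G) :
    ∃ s : Finset G,
      (∀ q ∈ s, q ∈ Q ∧ q - q₀ ∈ AddSubgroup.closure (P : Set G)) ∧
      ∀ x : G, (x ∈ Q ∧ x - q₀ ∈ AddSubgroup.closure (P : Set G)) ↔
        ∃ q ∈ s, ∃ p ∈ P, x = q + p := by
  set H := AddSubgroup.closure (P : Set G)
  obtain ⟨s, hsF, hcover⟩ := hQfg.exists_finset_subset_forall_eq_add
    (F := {x | x ∈ Q ∧ x - q₀ ∈ H}) fun _ hx => hx.1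
  refine ⟨s, fun q hq => hsF hq, fun x => ⟨fun hx => ?_, ?_⟩⟩
  · obtain ⟨m, hm, d, hdQ, rfl⟩ := hcover x hx
    have hdH : d ∈ H := by
      simpa using H.sub_mem hx.2 (hsF hm).2
    exact ⟨m, hm, d, hexact d hdQ hdH, rfl⟩
  · rintro ⟨q, hq, p, hp, rfl⟩
    refine ⟨Q.add_mem (hsF hq).1 (hPQ hp), ?_⟩
    simpa [sub_add_eq_add_sub] using H.add_mem (hsF hq).2 (AddSubgroup.subset_closure hp)

/-- Gordan-type finiteness: for an exact inclusion `P ⊆ Q` of fs monoids (realized as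
finitely generated, saturated submonoids of a torsion-free abelian group `G`, the
ambient group playing the role of `Q^gp`), every nonempty fiber of `Q → Q^gp/P^gp`
is a finitely generated `P`-set. -/
theorem stmt8 (G : Type*) [AddCommGroup G] [NoZeroSMulDivisors ℤ G]
    (P Q : AddSubmonoid G) (hPQ : P ≤ Q)
    (hPfg : P.FG) (hQfg : Q.FG)
    (hPsat : ∀ (x : G) (n : ℕ), 0 < n →
      x ∈ AddSubgroup.closure (P : Set G) → n • x ∈ P → x ∈ P)
    (hQsat : ∀ (x : G) (n : ℕ), 0 < n →
      x ∈ AddSubgroup.closure (Q : Set G) → n • x ∈ Q → x ∈ Q)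
    (hexact : ∀ x ∈ Q, x ∈ AddSubgroup.closure (P : Set G) → x ∈ P)
    (q₀ : G) (hq₀ : q₀ ∈ Q) :
    ∃ s : Finset G,
      (∀ q ∈ s, q ∈ Q ∧ q - q₀ ∈ AddSubgroup.closure (P : Set G)) ∧
      ∀ x : G, (x ∈ Q ∧ x - q₀ ∈ AddSubgroup.closure (P : Set G)) ↔
        ∃ q ∈ s, ∃ p ∈ P, x = q + p :=
  stmt8_general G P Q hPQ hQfg hexact q₀
end

section
/- Let P ⊆ Q be fs monoids (finitely generated, cancellative, torsion-free, saturated) with the inclusion exact (P = Q ∩ P^gp in Q^gp), and let q̃ ∈ Q^gp/P^gp be such that the fiber Q_{q̃} = {q ∈ Q : q ↦ q̃} is nonempty. Then there exist p ∈ P and q ∈ Q_{q̃} such that p + Q_{q̃} ⊆ q + P. -/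
/-!
Write `Q` as the image of `ℕ^T` for a finite generating set `T`. By Dickson's lemma the
preimage of the fiber `Q_q̃` has finitely many minimal elements, so the fiber is covered by
finitely many translates `b + Q` with `b ∈ Q_q̃`. Two elements of one fiber differ by an element of
`P^gp`, so by exactness every `x ∈ Q_q̃` lies in some `b + P`. Finally a single `p ∈ P` clears the
denominators of the finitely many differences `b - q₀ ∈ P^gp`, giving `p + Q_q̃ ⊆ q₀ + P`.
-/

theorem WellQuasiOrderedLE.exists_finset_subset_forall_exists_le {α : Type*} [PartialOrder α]
    [WellQuasiOrderedLE α] (s : Set α) :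
    ∃ B : Finset α, ↑B ⊆ s ∧ ∀ x ∈ s, ∃ b ∈ B, b ≤ x := by
  have hfin : {x | Minimal (· ∈ s) x}.Finite :=
    WellQuasiOrderedLE.finite_of_isAntichain (setOfPred_minimal_antichain (· ∈ s))
  refine ⟨hfin.toFinset, fun x hx => (hfin.mem_toFinset.mp hx).prop, fun x hx => ?_⟩
  obtain ⟨b, hbx, hb⟩ := exists_minimal_le_of_wellFoundedLT (· ∈ s) x hx
  exact ⟨b, hfin.mem_toFinset.mpr hb, hbx⟩

theorem AddSubmonoid.FG.exists_finset_subset_forall_exists_add {M : Type*} [AddCommMonoid M]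
    {Q : AddSubmonoid M} (hQ : Q.FG) {F : Set M} (hF : F ⊆ Q) :
    ∃ B : Finset M, ↑B ⊆ F ∧ ∀ x ∈ F, ∃ b ∈ B, ∃ y ∈ Q, x = b + y := by
  classical
  obtain ⟨T, rfl⟩ := hQ
  let π := Fintype.linearCombination ℕ (fun t : T => (t : M))
  have hπ (v : T → ℕ) : π v = ∑ t : T, v t • (t : M) := Fintype.linearCombination_apply ..
  obtain ⟨B, hBF, hmin⟩ := WellQuasiOrderedLE.exists_finset_subset_forall_exists_le (π ⁻¹' F)
  refine ⟨B.image π, by simpa using hBF, fun x hx => ?_⟩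
  obtain ⟨v, rfl⟩ : ∃ v, π v = x := by
    obtain ⟨v, hv⟩ := AddSubmonoid.mem_closure_finset'.mp (hF hx)
    exact ⟨v, by rw [hπ, hv]⟩
  obtain ⟨b, hb, hbv⟩ := hmin v hx
  refine ⟨π b, Finset.mem_image_of_mem π hb, π (v - b),
    AddSubmonoid.mem_closure_finset'.mpr ⟨v - b, hπ _⟩, ?_⟩
  rw [← map_add, add_tsub_cancel_of_le hbv]

theorem AddSubmonoid.exists_add_mem_of_mem_closure {G : Type*} [AddCommGroup G]
    (P : AddSubmonoid G) {g : G} (hg : g ∈ AddSubgroup.closure (P : Set G)) :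
    ∃ c ∈ P, c + g ∈ P := by
  induction hg using AddSubgroup.closure_induction with
  | mem x hx => exact ⟨0, P.zero_mem, by simpa using hx⟩
  | zero => exact ⟨0, P.zero_mem, by simp⟩
  | add x y _ _ ihx ihy =>
    obtain ⟨c, hc, hcx⟩ := ihx
    obtain ⟨d, hd, hdy⟩ := ihy
    exact ⟨c + d, P.add_mem hc hd, by simpa [add_add_add_comm] using P.add_mem hcx hdy⟩
  | neg x _ ihx =>
    obtain ⟨c, hc, hcx⟩ := ihx
    exact ⟨c + x, hcx, by simpa using hc⟩

theorem AddSubmonoid.exists_add_mem_of_finset_subset_closure {G : Type*} [AddCommGroup G]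
    (P : AddSubmonoid G) (s : Finset G) (hs : (s : Set G) ⊆ AddSubgroup.closure (P : Set G)) :
    ∃ p ∈ P, ∀ g ∈ s, p + g ∈ P := by
  classical
  induction s using Finset.induction_on with
  | empty => exact ⟨0, P.zero_mem, by simp⟩
  | insert g s _ ih =>
    rw [Finset.coe_insert, Set.insert_subset_iff] at hs
    obtain ⟨p, hp, hps⟩ := ih hs.2
    obtain ⟨c, hc, hcg⟩ := P.exists_add_mem_of_mem_closure hs.1
    refine ⟨p + c, P.add_mem hp hc, fun h hh => ?_⟩
    rcases Finset.mem_insert.mp hh with rfl | hh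
    · simpa [add_assoc] using P.add_mem hp hcg
    · simpa [add_right_comm] using P.add_mem (hps h hh) hc

theorem stmt9_general (G : Type*) [AddCommGroup G]
    (P Q : AddSubmonoid G)
    (hQfg : Q.FG)
    (hexact : ∀ x ∈ Q, x ∈ AddSubgroup.closure (P : Set G) → x ∈ P)
    (q₀ : G) (hq₀ : q₀ ∈ Q) :
    ∃ p ∈ P, ∃ q : G, (q ∈ Q ∧ q - q₀ ∈ AddSubgroup.closure (P : Set G)) ∧
      ∀ x : G, (x ∈ Q ∧ x - q₀ ∈ AddSubgroup.closure (P : Set G)) →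
        ∃ p' ∈ P, p + x = q + p' := by
  classical
  set K := AddSubgroup.closure (P : Set G)
  obtain ⟨B, hBF, hcover⟩ := hQfg.exists_finset_subset_forall_exists_add
    (F := {x | x ∈ Q ∧ x - q₀ ∈ K}) fun _ hx => hx.1
  obtain ⟨p, hp, hpB⟩ := P.exists_add_mem_of_finset_subset_closure (B.image (· - q₀)) <| by
    simpa [Set.subset_def] using fun b hb => (hBF hb).2
  refine ⟨p, hp, q₀, ⟨hq₀, by simp⟩, fun x hx => ?_⟩
  obtain ⟨b, hb, y, hy, rfl⟩ := hcover x hx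
  have hyP : y ∈ P := hexact y hy <| by simpa using K.sub_mem hx.2 (hBF hb).2
  exact ⟨p + (b - q₀) + y, P.add_mem (hpB _ (Finset.mem_image_of_mem _ hb)) hyP, by abel⟩

/-- For an exact inclusion `P ⊆ Q` of fs monoids (realized as finitely generated,
saturated submonoids of a torsion-free abelian group `G`), any nonempty fiber `Q_q̃`
of `Q → Q^gp/P^gp` admits `p ∈ P` and `q ∈ Q_q̃` with `p + Q_q̃ ⊆ q + P`. -/
theorem stmt9 (G : Type*) [AddCommGroup G] [NoZeroSMulDivisors ℤ G]
    (P Q : AddSubmonoid G) (hPQ : P ≤ Q)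
    (hPfg : P.FG) (hQfg : Q.FG)
    (hPsat : ∀ (x : G) (n : ℕ), 0 < n →
      x ∈ AddSubgroup.closure (P : Set G) → n • x ∈ P → x ∈ P)
    (hQsat : ∀ (x : G) (n : ℕ), 0 < n →
      x ∈ AddSubgroup.closure (Q : Set G) → n • x ∈ Q → x ∈ Q)
    (hexact : ∀ x ∈ Q, x ∈ AddSubgroup.closure (P : Set G) → x ∈ P)
    (q₀ : G) (hq₀ : q₀ ∈ Q) :
    ∃ p ∈ P, ∃ q : G, (q ∈ Q ∧ q - q₀ ∈ AddSubgroup.closure (P : Set G)) ∧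
      ∀ x : G, (x ∈ Q ∧ x - q₀ ∈ AddSubgroup.closure (P : Set G)) →
        ∃ p' ∈ P, p + x = q + p' :=
  stmt9_general G P Q hQfg hexact q₀ hq₀
end

section
/- Let A be a local commutative ring with maximal ideal m, and let O ⊆ A be a subring containing m such that O/m is a valuation ring with fraction field A/m (a 'semivaluation ring'). Let O' be an integrally closed local domain which is an O-algebra, such that m·O' ≠ O' and such that for every prime ideal p of O' lying over m the residue field extension κ(p)/Frac(O/m) is algebraic. Then the radical m' = √(m·O') is a prime ideal of O' and is the unique prime of O' over m, and the quotient O'/m' is an integrally closed (normal) domain. -/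
/-!
Write `I = m·O'`. An element `c ∈ O ∖ m` is a unit of `A`, so `m = c·m` and hence `I = cᵏ·I` for
all `k`. As `O'` is integrally closed, every element of `√I` is then divisible by every power of
`c`: modulo `√I` the elements of `O ∖ m` behave like units. This forces the minimal primes of `I`
to lie over `m`, and since the residue extensions are algebraic the primes over `m` form an
antichain, so they are exactly the minimal primes of `I`. Two distinct ones `Q₁, Q₂` are
impossible: a point `x ∈ Q₁ ∖ Q₂` yields `c = r + v` with `r ∈ (x)` and `v x ∈ √I`, so
`r (r - c) ∈ √I`, whence `r = c b` with `b ∈ Q₁` and `1 - b ∈ Q₂`, contradicting locality of `O'`.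
Hence `√I` is the unique prime over `m`. Finally every denominator in `O'/√I` can be replaced by
the image of some `c ∈ O ∖ m`, and a fraction `x / c` integral over `O'/√I` has `c ∣ x`, again by
the divisibility property of `√I`.
-/

open Polynomial IsLocalRing

theorem Ideal.le_span_pow_mul {R : Type*} [CommSemiring R] {I : Ideal R} {a : R}
    (h : I ≤ Ideal.span {a} * I) (k : ℕ) : I ≤ Ideal.span {a ^ k} * I := by
  induction k with
  | zero => simp
  | succ k ih =>
    calc I ≤ Ideal.span {a} * I := h
      _ ≤ Ideal.span {a} * (Ideal.span {a ^ k} * I) := Ideal.mul_mono_right ih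
      _ = Ideal.span {a ^ (k + 1)} * I := by
        rw [← mul_assoc, Ideal.span_singleton_mul_span_singleton, pow_succ']

theorem Ideal.map_le_span_mul_map {R S : Type*} [CommRing R] [CommRing S] (f : R →+* S)
    {I : Ideal R} {a : R} (h : I ≤ Ideal.span {a} * I) :
    I.map f ≤ Ideal.span {f a} * I.map f :=
  calc I.map f ≤ (Ideal.span {a} * I).map f := Ideal.map_mono h
    _ = Ideal.span {f a} * I.map f := by
      rw [Ideal.map_mul, Ideal.map_span, Set.image_singleton]

theorem Ideal.exists_mul_mem_radical_of_mem_minimalPrimes {R : Type*} [CommRing R]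
    {I P : Ideal R} (hP : P ∈ I.minimalPrimes) {x : R} (hx : x ∈ P) :
    ∃ s ∉ P, s * x ∈ I.radical := by
  have := hP.1.1
  by_contra! h
  have hdisj : Disjoint (I : Set R) (P.primeCompl ⊔ Submonoid.powers x : Submonoid R) := by
    refine Set.disjoint_left.mpr fun _ hI hM => ?_
    obtain ⟨s, hs, _, ⟨n, rfl⟩, rfl⟩ := Submonoid.mem_sup.mp hM
    refine h s hs ⟨n + 1, ?_⟩
    rw [show (s * x) ^ (n + 1) = s ^ n * x * (s * x ^ n) by ring]
    exact I.mul_mem_left _ hI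
  obtain ⟨Q, hQ, hIQ, hQdisj⟩ := Ideal.exists_le_prime_disjoint I _ hdisj
  have hQP : Q ≤ P := fun y hyQ => by_contra fun hyP =>
    Set.disjoint_left.mp hQdisj hyQ (Submonoid.mem_sup_left hyP)
  exact Set.disjoint_left.mp hQdisj (hP.2 ⟨hQ, hIQ⟩ hQP hx)
    (Submonoid.mem_sup_right (Submonoid.mem_powers x))

theorem Ideal.notMem_of_mem_minimalPrimes_of_le_span_mul {R : Type*} [CommRing R] [IsDomain R]
    {I P : Ideal R} (hP : P ∈ I.minimalPrimes) {a : R} (ha : a ≠ 0)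
    (hI : I ≤ Ideal.span {a} * I) : a ∉ P := by
  intro haP
  obtain ⟨s, hsP, n, hn⟩ := Ideal.exists_mul_mem_radical_of_mem_minimalPrimes hP haP
  obtain ⟨z, hzI, hz⟩ := Ideal.mem_span_singleton_mul.mp (Ideal.le_span_pow_mul hI (n + 1) hn)
  have hsz : s ^ n = a * z := by
    refine mul_left_cancel₀ (pow_ne_zero n ha) ?_
    rw [← mul_pow, mul_comm a s, ← hz]
    ring
  exact hsP (hP.1.1.mem_of_pow_mem n (hsz ▸ P.mul_mem_left a (hP.1.2 hzI)))

theorem Ideal.Quotient.algebraMap_fractionRing_mk_eq_zero_iff {R : Type*} [CommRing R]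
    {J : Ideal R} {y : R} :
    algebraMap (R ⧸ J) (FractionRing (R ⧸ J)) (Ideal.Quotient.mk J y) = 0 ↔ y ∈ J :=
  IsFractionRing.to_map_eq_zero_iff.trans Ideal.Quotient.eq_zero_iff_mem

section IntegrallyClosed

variable {R : Type*} [CommRing R] [IsDomain R] [IsIntegrallyClosed R]

theorem pow_dvd_of_mem_radical {I : Ideal R} {a x : R} (hI : I ≤ Ideal.span {a} * I)
    (hx : x ∈ I.radical) (d : ℕ) : a ^ d ∣ x := by
  obtain ⟨n, hn⟩ := hx
  have hmem : x ^ (n + 1) ∈ Ideal.span {(a ^ d) ^ (n + 1)} * I := by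
    rw [← pow_mul]
    exact Ideal.le_span_pow_mul hI _ (by rw [pow_succ']; exact I.mul_mem_left x hn)
  have hdvd : x ^ (n + 1) ∈ Ideal.span {(a ^ d) ^ (n + 1)} := Ideal.mul_le_left hmem
  exact (IsIntegrallyClosed.pow_dvd_pow_iff n.succ_ne_zero).mp (Ideal.mem_span_singleton.mp hdvd)

theorem dvd_of_pow_natDegree_dvd_scaleRoots_eval {a x : R} (ha : a ≠ 0) {g : R[X]}
    (hg : g.Monic) (hd : g.natDegree ≠ 0) (h : a ^ g.natDegree ∣ (g.scaleRoots a).eval x) :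
    a ∣ x := by
  obtain ⟨e, he⟩ := h
  let K := FractionRing R
  have ha' : algebraMap R K a ≠ 0 :=
    (map_ne_zero_iff _ (IsFractionRing.injective R K)).mpr ha
  set y := algebraMap R K x / algebraMap R K a
  have hy : algebraMap R K a * y = algebraMap R K x := mul_div_cancel₀ _ ha'
  have hgy : aeval y g = algebraMap R K e := by
    have := scaleRoots_eval₂_mul (p := g) (algebraMap R K) y a
    rw [hy, eval₂_at_apply, he, map_mul, map_pow] at this
    exact (mul_left_cancel₀ (pow_ne_zero _ ha') this).symm
  obtain ⟨b, hb⟩ := IsIntegrallyClosed.isIntegral_iff.mp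
    (IsIntegral.of_aeval_monic hg hd (hgy ▸ isIntegral_algebraMap))
  refine ⟨b, IsFractionRing.injective R K ?_⟩
  rw [map_mul, hb, hy]

theorem dvd_of_mul_sub_mem_radical {I : Ideal R} {a x : R} (ha : a ≠ 0)
    (hI : I ≤ Ideal.span {a} * I) (hx : x * (x - a) ∈ I.radical) : a ∣ x := by
  have hX : (X : R[X]).scaleRoots a = X := by simpa using X_sub_C_scaleRoots (0 : R) a
  have hdeg : (X * (X - C 1) : R[X]).natDegree = 2 := by compute_degree!
  refine dvd_of_pow_natDegree_dvd_scaleRoots_eval ha (monic_X.mul (monic_X_sub_C 1))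
    (by rw [hdeg]; exact two_ne_zero) ?_
  rw [hdeg, mul_scaleRoots_of_noZeroDivisors, X_sub_C_scaleRoots, one_mul, hX]
  simpa using pow_dvd_of_mem_radical hI hx 2

section Quotient

variable {I : Ideal R} [I.radical.IsPrime]

local notation "K" => FractionRing (R ⧸ I.radical)

theorem dvd_of_isIntegral_div {a x : R} (ha : a ∉ I.radical) (hI : I ≤ Ideal.span {a} * I)
    (h : IsIntegral (R ⧸ I.radical)
      (algebraMap (R ⧸ I.radical) K (Ideal.Quotient.mk I.radical x) /
        algebraMap (R ⧸ I.radical) K (Ideal.Quotient.mk I.radical a))) :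
    a ∣ x := by
  set f := (algebraMap (R ⧸ I.radical) K).comp (Ideal.Quotient.mk I.radical)
  have hfa : f a ≠ 0 := Ideal.Quotient.algebraMap_fractionRing_mk_eq_zero_iff.not.mpr ha
  obtain ⟨g, hg, hgx⟩ := h
  obtain ⟨G, hGg, -, hG⟩ := lifts_and_degree_eq_and_monic
    ((mem_lifts g).mpr (map_surjective _ Ideal.Quotient.mk_surjective g)) hg
  have hGx : eval₂ f (f x / f a) G = 0 := by
    rw [← hGg, eval₂_map] at hgx
    exact hgx
  have hGd : G.natDegree ≠ 0 := fun h0 => by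
    rw [hG.natDegree_eq_zero.mp h0, eval₂_one] at hGx
    exact one_ne_zero hGx
  refine dvd_of_pow_natDegree_dvd_scaleRoots_eval (fun h0 => ha (h0 ▸ I.radical.zero_mem)) hG hGd
    (pow_dvd_of_mem_radical hI (Ideal.Quotient.algebraMap_fractionRing_mk_eq_zero_iff.mp ?_) _)
  have := scaleRoots_eval₂_eq_zero f (s := a) hGx
  rwa [mul_div_cancel₀ _ hfa, eval₂_at_apply] at this

theorem isIntegrallyClosed_quotient_radical
    (h : ∀ s ∉ I.radical, ∃ a ∉ I.radical, I ≤ Ideal.span {a} * I ∧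
      a ∈ Ideal.span {s} ⊔ I.radical) :
    IsIntegrallyClosed (R ⧸ I.radical) := by
  rw [isIntegrallyClosed_iff K]
  intro ξ hint
  obtain ⟨x', s', hs, rfl⟩ := IsFractionRing.div_surjective (A := R ⧸ I.radical) ξ
  obtain ⟨x, rfl⟩ := Ideal.Quotient.mk_surjective x'
  obtain ⟨s, rfl⟩ := Ideal.Quotient.mk_surjective s'
  obtain ⟨a, ha, hI, has⟩ := h s fun hs0 =>
    nonZeroDivisors.ne_zero hs (Ideal.Quotient.eq_zero_iff_mem.mpr hs0)
  obtain ⟨_, ht, w, hw, hsum⟩ := Submodule.mem_sup.mp has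
  obtain ⟨t, rfl⟩ := Ideal.mem_span_singleton'.mp ht
  set φ := (algebraMap (R ⧸ I.radical) K).comp (Ideal.Quotient.mk I.radical)
  have hφa : φ a = φ t * φ s := by
    rw [← hsum, map_add, map_mul, RingHom.comp_apply _ _ w,
      Ideal.Quotient.algebraMap_fractionRing_mk_eq_zero_iff.mpr hw, add_zero]
  have hφa0 : φ a ≠ 0 := Ideal.Quotient.algebraMap_fractionRing_mk_eq_zero_iff.not.mpr ha
  have hξ : φ x / φ s = φ (t * x) / φ a := by
    rw [hφa, map_mul, mul_div_mul_left _ _ (left_ne_zero_of_mul (hφa ▸ hφa0))]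
  have hint' : IsIntegral (R ⧸ I.radical) (φ (t * x) / φ a) := by rw [← hξ]; exact hint
  obtain ⟨b, hb⟩ := dvd_of_isIntegral_div ha hI hint'
  refine ⟨Ideal.Quotient.mk I.radical b, ?_⟩
  change φ b = φ x / φ s
  rw [hξ, hb, map_mul, mul_div_cancel_left₀ _ hφa0]

end Quotient

end IntegrallyClosed

/-- `S ⧸ P` is algebraic over `R ⧸ p` for every prime `P` of `S` over `p`: a coefficient outside
`p` makes the polynomial nonzero over `R ⧸ p`. -/
def Ideal.FiberIsAlgebraic {R : Type*} [CommRing R] (p : Ideal R) (S : Type*) [CommRing S]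
    [Algebra R S] : Prop :=
  ∀ P : Ideal S, P.IsPrime → P.comap (algebraMap R S) = p →
    ∀ x : S ⧸ P, ∃ f : R[X], (∃ i, f.coeff i ∉ p) ∧
      eval₂ ((Ideal.Quotient.mk P).comp (algebraMap R S)) x f = 0

section Fiber

variable {R S : Type*} [CommRing R] [CommRing S] [Algebra R S] {p : Ideal R}

theorem Ideal.exists_isPrime_le_comap_eq [p.IsPrime] {J : Ideal S}
    (hJ : p.map (algebraMap R S) ≤ J) (h : ∀ c ∉ p, algebraMap R S c ∉ J) :
    ∃ P : Ideal S, P.IsPrime ∧ J ≤ P ∧ P.comap (algebraMap R S) = p := by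
  have hdisj : Disjoint (J : Set S) (Algebra.algebraMapSubmonoid S p.primeCompl) :=
    Set.disjoint_left.mpr fun _ hJ' ⟨c, hc, hcx⟩ => h c hc (hcx ▸ hJ')
  obtain ⟨P, hP, hJP, hPdisj⟩ := Ideal.exists_le_prime_disjoint J _ hdisj
  refine ⟨P, hP, hJP, le_antisymm (fun c hc => by_contra fun hcp => ?_)
    (Ideal.map_le_iff_le_comap.mp (hJ.trans hJP))⟩
  exact Set.disjoint_left.mp hPdisj hc ⟨c, hcp, rfl⟩

theorem Ideal.eq_of_le_of_comap_eq {P Q : Ideal S} [P.IsPrime] (hPQ : P ≤ Q)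
    (hP : P.comap (algebraMap R S) = p) (hQ : Q.comap (algebraMap R S) = p)
    (halg : ∀ x : S ⧸ P, ∃ f : R[X], (∃ i, f.coeff i ∉ p) ∧
      eval₂ ((Ideal.Quotient.mk P).comp (algebraMap R S)) x f = 0) : P = Q := by
  by_contra hne
  obtain ⟨x, hxQ, hxP⟩ := SetLike.exists_of_lt (lt_of_le_of_ne hPQ hne)
  obtain ⟨f, ⟨i, hi⟩, hf⟩ := halg (Ideal.Quotient.mk P x)
  have hf0 : f.map (Ideal.Quotient.mk (P.comap (algebraMap R S))) ≠ 0 := fun h0 => hi <| by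
    simpa [hP, Ideal.Quotient.eq_zero_iff_mem] using congr_arg (coeff · i) h0
  have hfP : eval₂ (algebraMap R S) x f ∈ P := by
    rw [← Ideal.Quotient.eq_zero_iff_mem, hom_eval₂]
    exact hf
  have := Ideal.comap_lt_comap_of_root_mem_sdiff hPQ ⟨hxQ, hxP⟩ hf0 hfP
  rw [hP, hQ] at this
  exact lt_irrefl p this

theorem Ideal.radical_map_le_of_comap_eq {Q : Ideal S} [Q.IsPrime]
    (hQ : Q.comap (algebraMap R S) = p) : (p.map (algebraMap R S)).radical ≤ Q :=
  (Ideal.IsPrime.radical_le_iff ‹_›).mpr (Ideal.map_le_iff_le_comap.mpr hQ.ge)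

theorem algebraMap_ne_zero_of_comap_eq {Q : Ideal S} (hQ : Q.comap (algebraMap R S) = p) {c : R}
    (hc : c ∉ p) : algebraMap R S c ≠ 0 := fun h0 =>
  hc (hQ ▸ Ideal.mem_comap.mpr (h0 ▸ Q.zero_mem))

variable [IsDomain S]

theorem Ideal.comap_eq_of_mem_minimalPrimes_map (hdiv : ∀ c ∉ p, p ≤ Ideal.span {c} * p)
    (hc0 : ∀ c ∉ p, algebraMap R S c ≠ 0) {q : Ideal S}
    (hq : q ∈ (p.map (algebraMap R S)).minimalPrimes) : q.comap (algebraMap R S) = p :=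
  le_antisymm
    (fun c hc => by_contra fun hcp => Ideal.notMem_of_mem_minimalPrimes_of_le_span_mul hq
      (hc0 c hcp) (Ideal.map_le_span_mul_map _ (hdiv c hcp)) hc)
    (Ideal.map_le_iff_le_comap.mp hq.1.2)

theorem Ideal.mem_minimalPrimes_map_of_comap_eq (halg : p.FiberIsAlgebraic S)
    (hdiv : ∀ c ∉ p, p ≤ Ideal.span {c} * p) {P : Ideal S} [P.IsPrime]
    (hP : P.comap (algebraMap R S) = p) : P ∈ (p.map (algebraMap R S)).minimalPrimes := by
  obtain ⟨q, hq, hqP⟩ := Ideal.exists_minimalPrimes_le (Ideal.map_le_iff_le_comap.mpr hP.ge)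
  have := hq.1.1
  have hqc := Ideal.comap_eq_of_mem_minimalPrimes_map hdiv
    (fun _ => algebraMap_ne_zero_of_comap_eq hP) hq
  rwa [Ideal.eq_of_le_of_comap_eq hqP hqc hP (halg q this hqc)] at hq

theorem exists_algebraMap_mem_span_sup_colon [p.IsPrime] (halg : p.FiberIsAlgebraic S)
    (hdiv : ∀ c ∉ p, p ≤ Ideal.span {c} * p) (x : S) :
    ∃ c ∉ p, algebraMap R S c ∈
      Ideal.span {x} ⊔ (p.map (algebraMap R S)).radical.colon (Ideal.span {x}) := by
  by_contra! h
  obtain ⟨P, hP, hJP, hPc⟩ := Ideal.exists_isPrime_le_comap_eq (fun y hy =>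
    Ideal.mem_sup_right (Ideal.mem_colon_span_singleton.mpr
      ((p.map _).radical.mul_mem_right x (Ideal.le_radical hy)))) h
  obtain ⟨s, hsP, hsx⟩ := Ideal.exists_mul_mem_radical_of_mem_minimalPrimes
    (Ideal.mem_minimalPrimes_map_of_comap_eq halg hdiv hPc)
    (hJP (Ideal.mem_sup_left (Ideal.mem_span_singleton_self x)))
  exact hsP (hJP (Ideal.mem_sup_right (Ideal.mem_colon_span_singleton.mpr hsx)))

variable [IsLocalRing S] [IsIntegrallyClosed S]

theorem Ideal.eq_of_comap_eq_of_comap_eq [p.IsPrime] (halg : p.FiberIsAlgebraic S)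
    (hdiv : ∀ c ∉ p, p ≤ Ideal.span {c} * p) {Q₁ Q₂ : Ideal S} [hQ₁ : Q₁.IsPrime]
    [hQ₂ : Q₂.IsPrime] (h₁ : Q₁.comap (algebraMap R S) = p)
    (h₂ : Q₂.comap (algebraMap R S) = p) : Q₁ = Q₂ := by
  by_contra hne
  obtain ⟨x, hx₁, hx₂⟩ := SetLike.not_le_iff_exists.mp fun hle =>
    hne (Ideal.eq_of_le_of_comap_eq hle h₁ h₂ (halg Q₁ hQ₁ h₁))
  obtain ⟨c, hc, hcx⟩ := exists_algebraMap_mem_span_sup_colon halg hdiv x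
  obtain ⟨_, hr, v, hv, hrv⟩ := Submodule.mem_sup.mp hcx
  obtain ⟨u, rfl⟩ := Ideal.mem_span_singleton'.mp hr
  set a := algebraMap R S c
  have hvx : v * x ∈ (p.map (algebraMap R S)).radical := Ideal.mem_colon_span_singleton.mp hv
  have hv₂ : v ∈ Q₂ :=
    (hQ₂.mem_or_mem (Ideal.radical_map_le_of_comap_eq h₂ hvx)).resolve_right hx₂
  obtain ⟨b, hb⟩ : a ∣ u * x := by
    refine dvd_of_mul_sub_mem_radical (algebraMap_ne_zero_of_comap_eq h₁ hc)
      (Ideal.map_le_span_mul_map _ (hdiv c hc)) ?_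
    rw [← hrv, show u * x * (u * x - (u * x + v)) = -(u * (v * x)) by ring]
    exact neg_mem (Ideal.mul_mem_left _ _ hvx)
  have hb₁ : b ∈ Q₁ := (hQ₁.mem_or_mem (hb ▸ Q₁.mul_mem_left u hx₁)).resolve_left
    fun ha => hc (h₁ ▸ ha)
  have hb₂ : 1 - b ∈ Q₂ := by
    refine (hQ₂.mem_or_mem (?_ : a * (1 - b) ∈ Q₂)).resolve_left fun ha => hc (h₂ ▸ ha)
    rwa [mul_sub, mul_one, ← hb, ← hrv, add_sub_cancel_left]
  refine (maximalIdeal.isMaximal S).ne_top ((Ideal.eq_top_iff_one _).mpr ?_)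
  simpa using Ideal.add_mem _ (le_maximalIdeal hQ₁.ne_top hb₁) (le_maximalIdeal hQ₂.ne_top hb₂)

theorem Ideal.radical_map_eq_of_comap_eq [p.IsPrime] (halg : p.FiberIsAlgebraic S)
    (hdiv : ∀ c ∉ p, p ≤ Ideal.span {c} * p) {Q : Ideal S} [Q.IsPrime]
    (hQ : Q.comap (algebraMap R S) = p) : (p.map (algebraMap R S)).radical = Q := by
  have hmin : (p.map (algebraMap R S)).minimalPrimes = {Q} := by
    refine Set.eq_singleton_iff_unique_mem.mpr
      ⟨Ideal.mem_minimalPrimes_map_of_comap_eq halg hdiv hQ, fun q hq => ?_⟩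
    have := hq.1.1
    exact Ideal.eq_of_comap_eq_of_comap_eq halg hdiv (Ideal.comap_eq_of_mem_minimalPrimes_map hdiv
      (fun _ => algebraMap_ne_zero_of_comap_eq hQ) hq) hQ
  rw [← Ideal.sInf_minimalPrimes, hmin, sInf_singleton]

theorem isIntegrallyClosed_quotient_radical_map [p.IsPrime] (halg : p.FiberIsAlgebraic S)
    (hdiv : ∀ c ∉ p, p ≤ Ideal.span {c} * p) {Q : Ideal S} [hQ : Q.IsPrime]
    (hQp : Q.comap (algebraMap R S) = p) :
    IsIntegrallyClosed (S ⧸ (p.map (algebraMap R S)).radical) := by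
  have hrad := Ideal.radical_map_eq_of_comap_eq halg hdiv hQp
  have : (p.map (algebraMap R S)).radical.IsPrime := hrad ▸ hQ
  refine isIntegrallyClosed_quotient_radical fun s hs => ?_
  by_contra! h
  obtain ⟨P, hP, hJP, hPc⟩ := Ideal.exists_isPrime_le_comap_eq
    (J := Ideal.span {s} ⊔ (p.map (algebraMap R S)).radical)
    (Ideal.le_radical.trans le_sup_right) fun c hc => h _
      (fun hcQ => hc (hQp ▸ hrad ▸ hcQ)) (Ideal.map_le_span_mul_map _ (hdiv c hc))
  exact hs (Ideal.radical_map_eq_of_comap_eq halg hdiv hPc ▸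
    hJP (Ideal.mem_sup_left (Ideal.mem_span_singleton_self s)))

end Fiber

theorem le_span_mul_comap_maximalIdeal {A : Type*} [CommRing A] [IsLocalRing A] {O : Subring A}
    (hm : (maximalIdeal A : Set A) ⊆ O) {c : O}
    (hc : c ∉ (maximalIdeal A).comap O.subtype) :
    (maximalIdeal A).comap O.subtype ≤ Ideal.span {c} * (maximalIdeal A).comap O.subtype := by
  intro a ha
  have hcu : IsUnit (c : A) := by simpa using hc
  have hm' : (↑hcu.unit⁻¹ * a : A) ∈ maximalIdeal A := Ideal.mul_mem_left _ _ ha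
  refine Ideal.mem_span_singleton_mul.mpr ⟨⟨_, hm hm'⟩, hm', Subtype.ext ?_⟩
  change (c : A) * (↑hcu.unit⁻¹ * a) = a
  rw [← mul_assoc, hcu.mul_val_inv, one_mul]

theorem stmt13_general (A : Type*) [CommRing A] [IsLocalRing A]
    (O : Subring A) (hm : (IsLocalRing.maximalIdeal A : Set A) ⊆ O)
    (O' : Type*) [CommRing O'] [IsDomain O'] [IsLocalRing O'] [IsIntegrallyClosed O']
    [Algebra O O']
    (mO : Ideal O) (hmO : mO = (IsLocalRing.maximalIdeal A).comap O.subtype)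
    (hfiber : ∃ p : Ideal O', p.IsPrime ∧ p.comap (algebraMap O O') = mO)
    (halg : ∀ p : Ideal O', p.IsPrime → p.comap (algebraMap O O') = mO →
      ∀ x : O' ⧸ p, ∃ f : Polynomial O, (∃ i, f.coeff i ∉ mO) ∧
        Polynomial.eval₂ ((Ideal.Quotient.mk p).comp (algebraMap O O')) x f = 0) :
    (Ideal.map (algebraMap O O') mO).radical.IsPrime ∧
    (Ideal.map (algebraMap O O') mO).radical.comap (algebraMap O O') = mO ∧
    (∀ p : Ideal O', p.IsPrime → p.comap (algebraMap O O') = mO →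
      p = (Ideal.map (algebraMap O O') mO).radical) ∧
    IsIntegrallyClosed (O' ⧸ (Ideal.map (algebraMap O O') mO).radical) := by
  subst hmO
  obtain ⟨Q, hQ, hQc⟩ := hfiber
  have hdiv := fun c => le_span_mul_comap_maximalIdeal hm (c := c)
  have hrad := Ideal.radical_map_eq_of_comap_eq halg hdiv hQc
  refine ⟨hrad ▸ hQ, hrad ▸ hQc, fun P hP hPc => ?_,
    isIntegrallyClosed_quotient_radical_map halg hdiv hQc⟩
  exact (Ideal.radical_map_eq_of_comap_eq halg hdiv hPc).symm

/-- Let `O ⊆ A` be a semivaluation ring of the local ring `A` (i.e. `O` contains the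
maximal ideal `m` of `A` and its image in the residue field `A/m` is a valuation ring
with fraction field `A/m`).  Let `O'` be an integrally closed local domain which is an
`O`-algebra admitting a prime over `m` and such that for every prime `p` of `O'` over
`m` the residue extension is algebraic.  Then `m' = √(m·O')` is prime, it is the unique
prime of `O'` over `m`, and `O'/m'` is an integrally closed (normal) domain. -/
theorem stmt13 (A : Type*) [CommRing A] [IsLocalRing A]
    (O : Subring A) (hm : (IsLocalRing.maximalIdeal A : Set A) ⊆ O)
    (hval : ∀ z : IsLocalRing.ResidueField A,
      z ∈ O.map (IsLocalRing.residue A) ∨ z⁻¹ ∈ O.map (IsLocalRing.residue A))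
    (O' : Type*) [CommRing O'] [IsDomain O'] [IsLocalRing O'] [IsIntegrallyClosed O']
    [Algebra O O']
    (mO : Ideal O) (hmO : mO = (IsLocalRing.maximalIdeal A).comap O.subtype)
    (hfiber : ∃ p : Ideal O', p.IsPrime ∧ p.comap (algebraMap O O') = mO)
    (halg : ∀ p : Ideal O', p.IsPrime → p.comap (algebraMap O O') = mO →
      ∀ x : O' ⧸ p, ∃ f : Polynomial O, (∃ i, f.coeff i ∉ mO) ∧
        Polynomial.eval₂ ((Ideal.Quotient.mk p).comp (algebraMap O O')) x f = 0) :
    (Ideal.map (algebraMap O O') mO).radical.IsPrime ∧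
    (Ideal.map (algebraMap O O') mO).radical.comap (algebraMap O O') = mO ∧
    (∀ p : Ideal O', p.IsPrime → p.comap (algebraMap O O') = mO →
      p = (Ideal.map (algebraMap O O') mO).radical) ∧
    IsIntegrallyClosed (O' ⧸ (Ideal.map (algebraMap O O') mO).radical) :=
  stmt13_general A O hm O' mO hmO hfiber halg
end

section
/- Let R be a valuation ring with fraction field K, and let B be a local integrally closed domain containing R such that the inclusion R ⊆ B is a local homomorphism (the maximal ideal of B contracts to the maximal ideal of R) and the fraction field L of B is algebraic over K. Then B is a valuation ring. -/
/-!
Let `x ≠ 0` lie in the fraction field `L` of `B`. Since `x` is algebraic over the valuation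
ring `R`, dividing an equation for `x` by a coefficient of least valuation gives an equation
`∑ cᵢ xⁱ = 0` with `cⱼ = 1`; dividing further by `xʲ` yields `x s + x⁻¹ t = 1` with
`s ∈ B[x]` and `t ∈ B[x⁻¹]`. Elements of `B[x] ∩ B[x⁻¹]` are integral over `B`, hence lie in
`B`. So `u = x s = 1 - x⁻¹ t ∈ B`, and as `B` is local, `u` or `1 - u` is a unit. In the first
case `u x⁻¹ = s ∈ B[x] ∩ B[x⁻¹]`, so `x⁻¹ ∈ B`; in the second `(1 - u) x = t ∈ B[x] ∩ B[x⁻¹]`,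
so `x ∈ B`.
-/

open Polynomial

section AdjoinInv

variable {A L : Type*} [CommRing A] [Field L] [Algebra A L] {x : L}

theorem isIntegral_of_mem_adjoin_of_mem_adjoin_inv (hx : x ≠ 0) {y : L}
    (hy : y ∈ Algebra.adjoin A {x}) (hy' : y ∈ Algebra.adjoin A {x⁻¹}) : IsIntegral A y := by
  rw [Algebra.adjoin_singleton_eq_range_aeval, AlgHom.mem_range] at hy hy'
  obtain ⟨f, rfl⟩ := hy
  obtain ⟨g, hg⟩ := hy'
  set m := f.natDegree
  set k := g.natDegree
  -- `aeval x f • span {x ^ i | i ≤ m + k} ⊆ span {x ^ i | i ≤ m + k}`: for small `i` expand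
  -- `aeval x f` in powers of `x`, for large `i` in powers of `x⁻¹`
  set N : Submodule A L := Submodule.span A ((x ^ ·) '' Set.Iic (m + k))
  have pow_mem (i : ℕ) (hi : i ≤ m + k) : x ^ i ∈ N := Submodule.subset_span ⟨i, hi, rfl⟩
  have mul_pow_mem (i : ℕ) (hi : i ≤ m + k) : aeval x f * x ^ i ∈ N := by
    by_cases hki : k ≤ i
    · rw [← hg, aeval_eq_sum_range, Finset.sum_mul]
      refine Submodule.sum_mem _ fun t ht ↦ ?_
      have htk : t ≤ k := Nat.lt_succ_iff.mp (Finset.mem_range.mp ht)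
      rw [smul_mul_assoc, inv_pow, mul_comm, ← pow_sub₀ x hx (htk.trans hki)]
      exact Submodule.smul_mem _ _ (pow_mem _ (by omega))
    · rw [aeval_eq_sum_range, Finset.sum_mul]
      refine Submodule.sum_mem _ fun s hs ↦ ?_
      have hsm : s ≤ m := Nat.lt_succ_iff.mp (Finset.mem_range.mp hs)
      rw [smul_mul_assoc, ← pow_add]
      exact Submodule.smul_mem _ _ (pow_mem _ (by omega))
  refine isIntegral_of_smul_mem_submodule N ?_ (Submodule.fg_span ((Set.finite_Iic _).image _))
    _ fun n hn ↦ ?_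
  · exact (Submodule.ne_bot_iff N).mpr ⟨1, by simpa using pow_mem 0 (Nat.zero_le _), one_ne_zero⟩
  · refine (Submodule.span_le (p := N.comap (LinearMap.mulLeft A (aeval x f)))).mpr ?_ hn
    rintro _ ⟨i, hi, rfl⟩
    exact mul_pow_mem i hi

theorem exists_mul_add_inv_mul_eq_one_of_coeff_eq_one (hx : x ≠ 0) {p : A[X]}
    (hp : aeval x p = 0) {j : ℕ} (hj : p.coeff j = 1) :
    ∃ s ∈ Algebra.adjoin A {x}, ∃ t ∈ Algebra.adjoin A {x⁻¹}, x * s + x⁻¹ * t = 1 := by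
  set M : Submodule A L :=
    (Algebra.adjoin A {x}).toSubmodule.map (LinearMap.mulLeft A x) ⊔
      (Algebra.adjoin A {x⁻¹}).toSubmodule.map (LinearMap.mulLeft A x⁻¹)
  suffices (1 : L) ∈ M by
    obtain ⟨_, ⟨s, hs, rfl⟩, _, ⟨t, ht, rfl⟩, hst⟩ := Submodule.mem_sup.mp this
    exact ⟨s, hs, t, ht, hst⟩
  have zpow_mem (k : ℤ) (hk : k ≠ 0) : x ^ k ∈ M := by
    obtain (_ | n) | n := k
    · exact absurd rfl hk
    · refine Submodule.mem_sup_left ⟨x ^ n, pow_mem (Algebra.self_mem_adjoin_singleton A x) n, ?_⟩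
      rw [LinearMap.mulLeft_apply, ← pow_succ', ← zpow_natCast]
      rfl
    · refine Submodule.mem_sup_right ⟨x⁻¹ ^ n, pow_mem (Algebra.self_mem_adjoin_singleton A _) n, ?_⟩
      rw [LinearMap.mulLeft_apply, zpow_negSucc, pow_succ', mul_inv, inv_pow]
  have hsum : 1 + ∑ i ∈ (Finset.range (p.natDegree + j + 1)).erase j,
      p.coeff i • x ^ ((i : ℤ) - j) = 0 := by
    have hj' : p.coeff j • x ^ ((j : ℤ) - j) = 1 := by rw [hj, sub_self, zpow_zero, one_smul]
    rw [← hj', Finset.add_sum_erase _ (fun i ↦ p.coeff i • x ^ ((i : ℤ) - j))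
      (Finset.mem_range.mpr (by omega))]
    calc ∑ i ∈ Finset.range (p.natDegree + j + 1), p.coeff i • x ^ ((i : ℤ) - j)
        = (∑ i ∈ Finset.range (p.natDegree + j + 1), p.coeff i • x ^ i) * x ^ (-(j : ℤ)) := by
          rw [Finset.sum_mul]
          refine Finset.sum_congr rfl fun i _ ↦ ?_
          rw [smul_mul_assoc, sub_eq_add_neg, zpow_add₀ hx, zpow_natCast]
      _ = 0 := by rw [← aeval_eq_sum_range' (by omega), hp, zero_mul]
  rw [← neg_eq_of_add_eq_zero_left hsum]
  exact M.neg_mem (M.sum_mem fun i hi ↦ M.smul_mem _ (zpow_mem _ (by simp at hi; omega)))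

end AdjoinInv

section IsLocalRing

open IsLocalization

variable {B L : Type*} [CommRing B] [Field L] [Algebra B L] {x : L}

theorem IsUnit.isInteger_of_isInteger_mul {u : B} (hu : IsUnit u) {y : L}
    (h : IsInteger B (algebraMap B L u * y)) : IsInteger B y := by
  have := isInteger_smul (a := ↑hu.unit⁻¹) h
  rwa [Algebra.smul_def, ← mul_assoc, ← map_mul, IsUnit.val_inv_mul, map_one, one_mul] at this

variable [IsIntegrallyClosed B] [IsFractionRing B L]

theorem isInteger_of_mem_adjoin_of_mem_adjoin_inv (hx : x ≠ 0) {y : L}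
    (hy : y ∈ Algebra.adjoin B {x}) (hy' : y ∈ Algebra.adjoin B {x⁻¹}) : IsInteger B y :=
  IsIntegrallyClosed.isIntegral_iff.mp (isIntegral_of_mem_adjoin_of_mem_adjoin_inv hx hy hy')

theorem isInteger_or_isInteger_inv_of_mul_add_inv_mul_eq_one [IsLocalRing B] (hx : x ≠ 0)
    {s t : L} (hs : s ∈ Algebra.adjoin B {x}) (ht : t ∈ Algebra.adjoin B {x⁻¹})
    (h : x * s + x⁻¹ * t = 1) : IsInteger B x ∨ IsInteger B x⁻¹ := by
  have hx_mem := Algebra.self_mem_adjoin_singleton B x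
  have hx_inv_mem := Algebra.self_mem_adjoin_singleton B x⁻¹
  obtain ⟨u, hu⟩ : IsInteger B (x * s) := by
    refine isInteger_of_mem_adjoin_of_mem_adjoin_inv hx (mul_mem hx_mem hs) ?_
    rw [eq_sub_of_add_eq h]
    exact sub_mem (one_mem _) (mul_mem hx_inv_mem ht)
  rcases IsLocalRing.isUnit_or_isUnit_one_sub_self u with hunit | hunit
  · refine .inr (hunit.isInteger_of_isInteger_mul ?_)
    have hs' : algebraMap B L u * x⁻¹ = s := by
      rw [hu, mul_comm x, mul_assoc, mul_inv_cancel₀ hx, mul_one]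
    exact isInteger_of_mem_adjoin_of_mem_adjoin_inv hx (hs' ▸ hs)
      (mul_mem (Subalgebra.algebraMap_mem _ u) hx_inv_mem)
  · refine .inl (hunit.isInteger_of_isInteger_mul ?_)
    have ht' : algebraMap B L (1 - u) * x = t := by
      rw [map_sub, map_one, hu, ← eq_sub_of_add_eq' h, mul_comm, ← mul_assoc,
        mul_inv_cancel₀ hx, one_mul]
    exact isInteger_of_mem_adjoin_of_mem_adjoin_inv hx
      (mul_mem (Subalgebra.algebraMap_mem _ _) hx_mem) (ht' ▸ ht)

end IsLocalRing

theorem ValuationRing.exists_aeval_eq_zero_coeff_eq_one {R A : Type*} [CommRing R] [IsDomain R]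
    [ValuationRing R] [Ring A] [Algebra R A] [Module.IsTorsionFree R A] {x : A}
    (hx : IsAlgebraic R x) : ∃ p : R[X], aeval x p = 0 ∧ ∃ j, p.coeff j = 1 := by
  classical
  obtain ⟨p, hp0, hpx⟩ := hx
  -- a coefficient of least valuation divides all the others
  obtain ⟨j, hj, hmax⟩ := p.support.exists_max_image (fun i ↦ Ideal.span {p.coeff i})
    (support_nonempty.mpr hp0)
  have hdvd : C (p.coeff j) ∣ p := (C_dvd_iff_dvd_coeff _ _).mpr fun i ↦ by
    by_cases hi : i ∈ p.support
    · exact Ideal.span_singleton_le_span_singleton.mp (hmax i hi)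
    · rw [notMem_support_iff.mp hi]; exact dvd_zero _
  obtain ⟨q, hq⟩ := hdvd
  have hcj : p.coeff j ≠ 0 := mem_support_iff.mp hj
  refine ⟨q, ?_, j, ?_⟩
  · rw [hq, map_mul, aeval_C, ← Algebra.smul_def] at hpx
    exact (smul_eq_zero.mp hpx).resolve_left hcj
  · have : p.coeff j * q.coeff j = p.coeff j := by rw [← coeff_C_mul, ← hq]
    exact (mul_eq_left₀ hcj).mp this

theorem stmt14_general (R : Type*) [CommRing R] [IsDomain R] [ValuationRing R]
    (B : Type*) [CommRing B] [IsDomain B] [IsLocalRing B] [IsIntegrallyClosed B]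
    [Algebra R B] (hinj : Function.Injective (algebraMap R B))
    [Algebra.IsAlgebraic R B] :
    ValuationRing B := by
  let L := FractionRing B
  have : FaithfulSMul R B := (faithfulSMul_iff_algebraMap_injective R B).mpr hinj
  have : Algebra.IsAlgebraic R L := (IsFractionRing.isAlgebraic_iff' R B L).mp ‹_›
  refine (ValuationRing.iff_isInteger_or_isInteger B L).mpr fun x ↦ ?_
  obtain rfl | hx := eq_or_ne x 0
  · exact .inl ⟨0, map_zero _⟩
  obtain ⟨p, hpx, j, hpj⟩ :=
    ValuationRing.exists_aeval_eq_zero_coeff_eq_one (Algebra.IsAlgebraic.isAlgebraic (R := R) x)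
  obtain ⟨s, hs, t, ht, hst⟩ := exists_mul_add_inv_mul_eq_one_of_coeff_eq_one hx
    (p := p.map (algebraMap R B)) (by rwa [aeval_map_algebraMap])
    (by rw [coeff_map, hpj, map_one])
  exact isInteger_or_isInteger_inv_of_mul_add_inv_mul_eq_one hx hs ht hst

/-- A local integrally closed domain `B` dominating a valuation ring `R` inside an
algebraic extension of its fraction field is itself a valuation ring. -/
theorem stmt14 (R : Type*) [CommRing R] [IsDomain R] [ValuationRing R]
    (B : Type*) [CommRing B] [IsDomain B] [IsLocalRing B] [IsIntegrallyClosed B]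
    [Algebra R B] (hinj : Function.Injective (algebraMap R B))
    (hloc : IsLocalHom (algebraMap R B)) [Algebra.IsAlgebraic R B] :
    ValuationRing B :=
  stmt14_general R B hinj
end
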